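/- Let W^* ∈ ℝ^{d×d}, let D^A, D^B ∈ ℝ^{d×d} be diagonal matrices with strictly positive diagonal entries, P^A, P^B ∈ ℝ^{d×d} permutation matrices, and V^A, V^B ∈ ℝ^{d×d} diagonal 0/1 matrices with disjoint supports (V^A V^B = 0) and rank(V^A) + rank(V^B) = r. Define W^A = D^A P^A V^A W^* and W^B = D^B P^B V^B W^*. Then the matrix M = [V^A (P^A)ᵀ (D^A)⁻¹ | V^B (P^B)ᵀ (D^B)⁻¹] ∈ ℝ^{d×2d} has rank at most r, and with U = [I; I] ∈ ℝ^{2d×d} the FS-Merge folded weight satisfies M · blockDiag(W^A, W^B) · U = (V^A + V^B) W^*. Consequently, for every input matrix X ∈ ℝ^{d×N}, the merged layer reproduces the combined features: σ((M · blockDiag(W^A, W^B) · U) X) = σ((V^A + V^B) W^* X). -/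

import Mathlib

open Matrix

/-- Entrywise ReLU on matrices. -/
def relu {m n : Type*} (Z : Matrix m n ℝ) : Matrix m n ℝ :=
  Matrix.of fun i j => max (Z i j) 0

/-- `P` is a permutation matrix: the matrix of some permutation of the indices
(equivalently, a 0/1 matrix with exactly one `1` in each row and each column). -/
def IsPermMatrix {d : ℕ} (P : Matrix (Fin d) (Fin d) ℝ) : Prop :=
  ∃ σ : Equiv.Perm (Fin d), P = σ.permMatrix ℝ

lemma rank_add_le_aux {m n : Type*} [Fintype m] [Fintype n] [DecidableEq n]
    (A B : Matrix m n ℝ) : (A + B).rank ≤ A.rank + B.rank := by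
  simp only [Matrix.rank]
  have h : LinearMap.range (A + B).mulVecLin ≤
      LinearMap.range A.mulVecLin ⊔ LinearMap.range B.mulVecLin := by
    rintro x ⟨v, rfl⟩
    rw [Matrix.mulVecLin_add]
    exact Submodule.add_mem_sup ⟨v, rfl⟩ ⟨v, rfl⟩
  calc _ ≤ Module.finrank ℝ (LinearMap.range A.mulVecLin ⊔ LinearMap.range B.mulVecLin :
        Submodule ℝ (m → ℝ)) := Submodule.finrank_mono h
    _ ≤ _ := Submodule.finrank_add_le_finrank_add_finrank _ _

lemma perm_transpose_mul {d : ℕ} (σ : Equiv.Perm (Fin d)) :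
    (σ.permMatrix ℝ)ᵀ * (σ.permMatrix ℝ) = 1 := by
  have h : (σ.permMatrix ℝ)ᵀ = ((σ⁻¹ : Equiv.Perm (Fin d)).permMatrix ℝ) := by
    rw [Equiv.Perm.permMatrix, Equiv.Perm.permMatrix, ← PEquiv.toMatrix_symm,
      ← Equiv.toPEquiv_symm]
    rfl
  rw [h, Equiv.Perm.permMatrix, Equiv.Perm.permMatrix, PEquiv.toMatrix_toPEquiv_mul]
  ext i j
  simp [Equiv.toPEquiv_apply, Matrix.one_apply, Matrix.submatrix_apply, eq_comm]

lemma diag_inv_mul_aux {d : ℕ} (D : Matrix (Fin d) (Fin d) ℝ) (hD : D.IsDiag)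
    (hpos : ∀ i, 0 < D i i) : D⁻¹ * D = 1 := by
  apply Matrix.nonsing_inv_mul
  have : D = Matrix.diagonal D.diag := hD.diagonal_diag.symm
  rw [this, Matrix.det_diagonal]
  exact isUnit_iff_ne_zero.mpr (Finset.prod_ne_zero_iff.mpr fun i _ => (hpos i).ne')

lemma idem_aux {d : ℕ} (V : Matrix (Fin d) (Fin d) ℝ) (hV : V.IsDiag)
    (h01 : ∀ i, V i i = 0 ∨ V i i = 1) : V * V = V := by
  conv_lhs => rw [← hV.diagonal_diag]
  conv_rhs => rw [← hV.diagonal_diag]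
  rw [Matrix.diagonal_mul_diagonal]
  exact congrArg Matrix.diagonal (funext fun i => by
    rcases h01 i with h | h <;> simp [Matrix.diag, h])

lemma fold_aux {d : ℕ} (Wstar D P V : Matrix (Fin d) (Fin d) ℝ)
    (hD : D.IsDiag) (hpos : ∀ i, 0 < D i i) (hP : IsPermMatrix P)
    (hV : V.IsDiag) (h01 : ∀ i, V i i = 0 ∨ V i i = 1) :
    V * Pᵀ * D⁻¹ * (D * P * V * Wstar) = V * Wstar := by
  obtain ⟨σ, rfl⟩ := hP
  simp only [Matrix.mul_assoc]
  rw [← Matrix.mul_assoc D⁻¹ D, diag_inv_mul_aux D hD hpos, Matrix.one_mul,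
    ← Matrix.mul_assoc (σ.permMatrix ℝ)ᵀ, perm_transpose_mul, Matrix.one_mul,
    ← Matrix.mul_assoc V V, idem_aux V hV h01]

theorem case_study_low_rank_fs_merge_recovers_combined_backbone
    (d N r : ℕ) (Wstar : Matrix (Fin d) (Fin d) ℝ)
    (DA DB PA PB VA VB : Matrix (Fin d) (Fin d) ℝ)
    (hDA : DA.IsDiag) (hDApos : ∀ i, 0 < DA i i)
    (hDB : DB.IsDiag) (hDBpos : ∀ i, 0 < DB i i)
    (hPA : IsPermMatrix PA) (hPB : IsPermMatrix PB)
    (hVA : VA.IsDiag) (hVA01 : ∀ i, VA i i = 0 ∨ VA i i = 1)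
    (hVB : VB.IsDiag) (hVB01 : ∀ i, VB i i = 0 ∨ VB i i = 1)
    (hdisj : VA * VB = 0) (hr : VA.rank + VB.rank = r) :
    let WA := DA * PA * VA * Wstar
    let WB := DB * PB * VB * Wstar
    let M := Matrix.fromCols (VA * PAᵀ * DA⁻¹) (VB * PBᵀ * DB⁻¹)
    let U : Matrix (Fin d ⊕ Fin d) (Fin d) ℝ :=
      Matrix.fromRows (1 : Matrix (Fin d) (Fin d) ℝ) (1 : Matrix (Fin d) (Fin d) ℝ)
    M.rank ≤ r ∧
    M * Matrix.fromBlocks WA 0 0 WB * U = (VA + VB) * Wstar ∧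
    ∀ X : Matrix (Fin d) (Fin N) ℝ,
      relu ((M * Matrix.fromBlocks WA 0 0 WB * U) * X) = relu ((VA + VB) * Wstar * X) := by
  intro WA WB M U
  have A₁ := VA * PAᵀ * DA⁻¹
  have hmain : M * Matrix.fromBlocks WA 0 0 WB * U = (VA + VB) * Wstar := by
    show Matrix.fromCols (VA * PAᵀ * DA⁻¹) (VB * PBᵀ * DB⁻¹) *
        Matrix.fromBlocks WA 0 0 WB * U = (VA + VB) * Wstar
    rw [Matrix.fromCols_mul_fromBlocks]
    show Matrix.fromCols _ _ * Matrix.fromRows 1 1 = _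
    rw [Matrix.fromCols_mul_fromRows]
    simp only [Matrix.mul_zero, add_zero, zero_add, Matrix.mul_one]
    rw [fold_aux Wstar DA PA VA hDA hDApos hPA hVA hVA01,
      fold_aux Wstar DB PB VB hDB hDBpos hPB hVB hVB01, Matrix.add_mul]
  refine ⟨?_, hmain, fun X => by rw [hmain]⟩
  -- rank bound
  have hsplit : M = Matrix.fromCols (VA * PAᵀ * DA⁻¹) 0 +
      Matrix.fromCols 0 (VB * PBᵀ * DB⁻¹) := by
    show Matrix.fromCols _ _ = _
    ext i (j | j) <;> simp
  have h1 : (Matrix.fromCols (VA * PAᵀ * DA⁻¹)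
      (0 : Matrix (Fin d) (Fin d) ℝ)).rank ≤ VA.rank := by
    have : Matrix.fromCols (VA * PAᵀ * DA⁻¹) (0 : Matrix (Fin d) (Fin d) ℝ) =
        VA * Matrix.fromCols (PAᵀ * DA⁻¹) 0 := by
      rw [Matrix.mul_fromCols, Matrix.mul_zero, Matrix.mul_assoc]
    rw [this]
    exact Matrix.rank_mul_le_left _ _
  have h2 : (Matrix.fromCols (0 : Matrix (Fin d) (Fin d) ℝ)
      (VB * PBᵀ * DB⁻¹)).rank ≤ VB.rank := by
    have : Matrix.fromCols (0 : Matrix (Fin d) (Fin d) ℝ) (VB * PBᵀ * DB⁻¹) =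
        VB * Matrix.fromCols 0 (PBᵀ * DB⁻¹) := by
      rw [Matrix.mul_fromCols, Matrix.mul_zero, Matrix.mul_assoc]
    rw [this]
    exact Matrix.rank_mul_le_left _ _
  calc M.rank ≤ _ + _ := hsplit ▸ rank_add_le_aux _ _
    _ ≤ VA.rank + VB.rank := add_le_add h1 h2
    _ = r := hr
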